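/- arXiv:2104.08609 — 2 statements merged into one kernel-verified Lean document; each statement's English description precedes it below -/
import Mathlib

section
/- Let μ be a valuation on K̄[x] (K̄ algebraically closed), f ∈ K̄[x] non-constant with an optimizing root a (i.e., μ(x−a) = δ(f) = max over roots b of f of μ(x−b)). If g ∈ K̄[x] satisfies δ(g) < δ(f), then μ_{x−a}(g) = μ(g) = μ(g(a)), and the residue of g/g(a) under μ_{x−a} equals 1. -/
open Polynomial

variable {K : Type*} [Field K] {Γ : Type*} [AddCommGroup Γ] [LinearOrder Γ] [IsOrderedAddMonoid Γ]

/-- The `i`-th coefficient of the `q`-expansion of `f`. -/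
noncomputable def qCoeff (q f : Polynomial K) (i : ℕ) : Polynomial K :=
  f / q ^ i % q

/-- The truncation `ν_q` of `w` at `q` :
`ν_q(f) = min_i ν(f_i q^i)` over the `q`-expansion `f = Σ f_i q^i`. -/
noncomputable def trunc (w : Polynomial K → WithTop Γ) (q f : Polynomial K) : WithTop Γ :=
  (Finset.range (f.natDegree + 1)).inf fun i => w (qCoeff q f i * q ^ i)

/-- `b` is an admissible index in the definition of `ε(f)`. -/
def ValidIdx (w : Polynomial K → WithTop Γ) (f : Polynomial K) (b : ℕ) : Prop :=
  1 ≤ b ∧ b ≤ f.natDegree ∧ w f ≠ ⊤ ∧ w (Polynomial.hasseDeriv b f) ≠ ⊤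

/-- `(w(g) - w(∂_c g))/c ≤ (w(f) - w(∂_b f))/b`, written multiplicatively
(cross-multiplied) to stay inside `WithTop Γ`. -/
def RatioLE (w : Polynomial K → WithTop Γ) (g : Polynomial K) (c : ℕ)
    (f : Polynomial K) (b : ℕ) : Prop :=
  b • w g + c • w (Polynomial.hasseDeriv b f) ≤ c • w f + b • w (Polynomial.hasseDeriv c g)

/-- `f` is a generator of the support of `w`. -/
def IsGenSupp (w : Polynomial K → WithTop Γ) (f : Polynomial K) : Prop :=
  ∀ g, w g = ⊤ ↔ f ∣ g

/-- `ε(f) ≥ ε(Q)` (for the valuation `w`), taking the conventions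
`ε(f) = -∞` if `deg f = 0` (more generally, if the defining set is empty) and
`ε(f) = ∞` if `f` generates the support of `w`. -/
def EpsGE (w : Polynomial K → WithTop Γ) (f Q : Polynomial K) : Prop :=
  IsGenSupp w f ∨
    (¬ IsGenSupp w Q ∧
      ((∀ c, ¬ ValidIdx w Q c) ∨
        ∃ b, ValidIdx w f b ∧ ∀ c, ValidIdx w Q c → RatioLE w Q c f b))

/-- `Q` is a key polynomial for `w` : `Q` is monic and
`ε(f) ≥ ε(Q)` implies `deg f ≥ deg Q`. -/
def IsKeyPoly (w : Polynomial K → WithTop Γ) (Q : Polynomial K) : Prop :=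
  Q.Monic ∧ ∀ f : Polynomial K, f ≠ 0 → EpsGE w f Q → Q.natDegree ≤ f.natDegree


/-!
Expand `g` at `a`: Taylor's shift turns `X - C b` into `X + C (a - b)`, and for a root `b` of `g`
the ultrametric inequality gives `μ(a - b) = μ(x - b) < μ(x - a)`, so in the `(x - a)`-expansion of
each linear factor the constant term has strictly the smallest value. This property of an expansion
is multiplicative, and `g` is a constant times a product of such factors, so the constant term
`g(a)` of the `(x - a)`-expansion of `g` strictly dominates all other terms. Hence the truncation
at `x - a` and `μ` itself both equal `μ(g(a))`, while every term of `g - g(a)` is strictly larger,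
i.e. `g / g(a)` has residue `1`.
-/

open Polynomial

namespace Polynomial

variable {R : Type*} [CommRing R]

theorem taylor_divByMonic [Nontrivial R] (r : R) (p : R[X]) {m : R[X]} (hm : m.Monic) :
    taylor r (p /ₘ m) = taylor r p /ₘ taylor r m := by
  have hm' : (taylor r m).Monic := by rw [Monic, leadingCoeff_taylor]; exact hm
  refine ((div_modByMonic_unique (taylor r (p /ₘ m)) (taylor r (p %ₘ m)) hm' ⟨?_, ?_⟩).1).symm
  · rw [← taylor_mul, ← map_add, modByMonic_add_div p m]
  · rw [degree_taylor, degree_taylor]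
    exact degree_modByMonic_lt p hm

theorem coeff_divByMonic_X_pow [Nontrivial R] (p : R[X]) (i n : ℕ) :
    (p /ₘ X ^ i).coeff n = p.coeff (n + i) := by
  have hrem : (p %ₘ X ^ i).degree < (n + i : ℕ) :=
    (degree_modByMonic_lt _ (monic_X_pow i)).trans_le
      ((degree_X_pow_le i).trans (by exact_mod_cast Nat.le_add_left i n))
  conv_rhs => rw [← modByMonic_add_div p (X ^ i)]
  rw [coeff_add, coeff_X_pow_mul, coeff_eq_zero_of_degree_lt hrem, zero_add]

theorem taylor_X_sub_C (a b : R) : taylor a (X - C b) = X + C (a - b) := by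
  rw [map_sub, taylor_X, taylor_C, C_sub]
  ring

theorem eval_divByMonic_X_sub_C_pow [Nontrivial R] (p : R[X]) (a : R) (i : ℕ) :
    (p /ₘ (X - C a) ^ i).eval a = (taylor a p).coeff i := by
  rw [← taylor_coeff_zero, taylor_divByMonic _ _ ((monic_X_sub_C a).pow i), taylor_pow,
    taylor_X_sub_C, sub_self, C_0, add_zero, coeff_divByMonic_X_pow, zero_add]

end Polynomial

theorem AddValuation.map_ne_top_of_isUnit {R : Type*} [Ring R] (μ : AddValuation R (WithTop Γ))
    {u : R} (hu : IsUnit u) : μ u ≠ ⊤ := by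
  obtain ⟨u, rfl⟩ := hu
  have hunit : μ ↑u + μ ↑u⁻¹ ≠ ⊤ := by
    rw [← μ.map_mul, Units.mul_inv, μ.map_one]
    exact WithTop.zero_ne_top
  exact (WithTop.add_ne_top.mp hunit).1

section Dominance

variable {R : Type*} [CommRing R]

/-- `p` is read as the coefficient list of the expansion `Σ pᵢ qⁱ`; its constant term must have
strictly the smallest `μ`-value. -/
def HasDominantConstCoeff (μ : AddValuation R[X] (WithTop Γ)) (q p : R[X]) : Prop :=
  ∀ i, 0 < i → μ (C (p.coeff 0)) < μ (C (p.coeff i) * q ^ i)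

variable {μ : AddValuation R[X] (WithTop Γ)} {q p r : R[X]}

namespace HasDominantConstCoeff

theorem ne_top (hp : HasDominantConstCoeff μ q p) : μ (C (p.coeff 0)) ≠ ⊤ :=
  (hp 1 one_pos).ne_top

theorem le (hp : HasDominantConstCoeff μ q p) (i : ℕ) :
    μ (C (p.coeff 0)) ≤ μ (C (p.coeff i) * q ^ i) := by
  rcases i.eq_zero_or_pos with rfl | hi
  · rw [pow_zero, mul_one]
  · exact (hp i hi).le

theorem mul (hp : HasDominantConstCoeff μ q p) (hr : HasDominantConstCoeff μ q r) :
    HasDominantConstCoeff μ q (p * r) := by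
  intro i hi
  rw [mul_coeff_zero, C_mul, μ.map_mul, coeff_mul, map_sum, Finset.sum_mul]
  refine μ.map_lt_sum (WithTop.add_ne_top.mpr ⟨hp.ne_top, hr.ne_top⟩) fun jk hjk => ?_
  obtain ⟨j, k⟩ := jk
  replace hjk : j + k = i := Finset.HasAntidiagonal.mem_antidiagonal.mp hjk
  have hsplit : C (p.coeff j * r.coeff k) * q ^ i =
      C (p.coeff j) * q ^ j * (C (r.coeff k) * q ^ k) := by
    rw [← hjk, C_mul, pow_add]; ring
  rw [hsplit, μ.map_mul]
  rcases j.eq_zero_or_pos with rfl | hj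
  · exact WithTop.add_lt_add_of_le_of_lt hp.ne_top (hp.le 0) (hr k (by omega))
  · exact WithTop.add_lt_add_of_lt_of_le hr.ne_top (hp j hj) (hr.le k)

end HasDominantConstCoeff

theorem hasDominantConstCoeff_C {c : R} (hc : μ (C c) ≠ ⊤) : HasDominantConstCoeff μ q (C c) := by
  intro i hi
  rw [coeff_C_zero, coeff_C_of_ne_zero hi.ne', C_0, zero_mul, μ.map_zero]
  exact hc.lt_top

theorem hasDominantConstCoeff_X_add_C {b : R} (hb : μ (C b) < μ q) :
    HasDominantConstCoeff μ q (X + C b) := by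
  intro i hi
  rw [coeff_add, coeff_add, coeff_X_zero, coeff_C_zero, zero_add, coeff_C_of_ne_zero hi.ne',
    add_zero]
  rcases eq_or_ne i 1 with rfl | hi1
  · rwa [coeff_X_one, C_1, one_mul, pow_one]
  · rw [coeff_X_of_ne_one hi1, C_0, zero_mul, μ.map_zero]
    exact hb.ne_top.lt_top

theorem valuation_C_sub_lt {a b : R} (h : μ (X - C b) < μ (X - C a)) :
    μ (C (a - b)) < μ (X - C a) := by
  have hab : C (a - b) = (X - C b) - (X - C a) := by rw [C_sub]; ring
  rwa [hab, μ.map_sub_eq_of_lt_left h]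

end Dominance

theorem qCoeff_X_sub_C (a : K) (p : K[X]) (i : ℕ) :
    qCoeff (X - C a) p i = C ((taylor a p).coeff i) := by
  rw [qCoeff, ← divByMonic_eq_div _ ((monic_X_sub_C a).pow i), mod_X_sub_C_eq_C_eval,
    eval_divByMonic_X_sub_C_pow]

omit [AddCommGroup Γ] [IsOrderedAddMonoid Γ] in
theorem trunc_X_sub_C (w : K[X] → WithTop Γ) (a : K) (p : K[X]) :
    trunc w (X - C a) p = (Finset.range (p.natDegree + 1)).inf
      fun i => w (C ((taylor a p).coeff i) * (X - C a) ^ i) := by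
  simp only [trunc, qCoeff_X_sub_C]

theorem trunc_X_sub_C_le (μ : AddValuation K[X] (WithTop Γ)) (a : K) (p : K[X]) :
    trunc μ (X - C a) p ≤ μ p := by
  conv_rhs => rw [← sum_taylor_eq p a, sum_over_range' _ (fun _ => by rw [C_0, zero_mul])
    _ (by rw [natDegree_taylor]; exact Nat.lt_succ_self _)]
  rw [trunc_X_sub_C]
  exact μ.map_le_sum fun i hi => Finset.inf_le hi

theorem trunc_X_sub_C_eq {μ : AddValuation K[X] (WithTop Γ)} {a : K} {p : K[X]}
    (hp : HasDominantConstCoeff μ (X - C a) (taylor a p)) :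
    trunc μ (X - C a) p = μ (C (p.eval a)) := by
  rw [trunc_X_sub_C, ← taylor_coeff_zero]
  refine le_antisymm ?_ (Finset.le_inf fun i _ => hp.le i)
  refine (Finset.inf_le (Finset.mem_range.mpr p.natDegree.succ_pos)).trans_eq ?_
  rw [pow_zero, mul_one]

theorem lt_trunc_X_sub_C_sub_eval {μ : AddValuation K[X] (WithTop Γ)} {a : K} {p : K[X]}
    (hp : HasDominantConstCoeff μ (X - C a) (taylor a p)) :
    μ (C (p.eval a)) < trunc μ (X - C a) (p - C (p.eval a)) := by
  rw [trunc_X_sub_C, Finset.lt_inf_iff (by simpa only [taylor_coeff_zero] using hp.ne_top.lt_top)]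
  intro i _
  rw [map_sub, taylor_C, coeff_sub, coeff_C, ← taylor_coeff_zero]
  rcases i.eq_zero_or_pos with rfl | hi
  · rw [if_pos rfl, sub_self, C_0, zero_mul, μ.map_zero]
    exact hp.ne_top.lt_top
  · rw [if_neg hi.ne', sub_zero]
    exact hp i hi

theorem hasDominantConstCoeff_taylor [IsAlgClosed K] {μ : AddValuation K[X] (WithTop Γ)} {a : K}
    {g : K[X]} (hg : g ≠ 0) (hδ : ∀ b : K, g.eval b = 0 → μ (X - C b) < μ (X - C a)) :
    HasDominantConstCoeff μ (X - C a) (taylor a g) := by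
  rw [← C_leadingCoeff_mul_prod_multiset_X_sub_C (p := g) IsAlgClosed.card_roots_eq_natDegree,
    taylor_mul, taylor_C]
  refine (hasDominantConstCoeff_C
    (μ.map_ne_top_of_isUnit ((leadingCoeff_ne_zero.mpr hg).isUnit.map C))).mul ?_
  refine Multiset.prod_induction (fun r => HasDominantConstCoeff μ (X - C a) (taylor a r)) _
    (fun r s hr hs => by rw [taylor_mul]; exact hr.mul hs) ?_ ?_
  · rw [taylor_one]
    exact hasDominantConstCoeff_C (μ.map_ne_top_of_isUnit (isUnit_one.map C))
  · intro r hr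
    obtain ⟨b, hb, rfl⟩ := Multiset.mem_map.mp hr
    rw [taylor_X_sub_C]
    exact hasDominantConstCoeff_X_add_C (valuation_C_sub_lt (hδ b (isRoot_of_mem_roots hb)))

theorem stmt6_general [IsAlgClosed K] (μ : AddValuation (Polynomial K) (WithTop Γ))
    (a : K) (g : Polynomial K) (hg : g ≠ 0)
    (hδ : ∀ b : K, g.eval b = 0 → μ (X - C b) < μ (X - C a)) :
    trunc (⇑μ) (X - C a) g = μ g ∧ μ g = μ (C (g.eval a)) ∧
      μ (C (g.eval a)) < trunc (⇑μ) (X - C a) (g - C (g.eval a)) := by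
  have hdom := hasDominantConstCoeff_taylor hg hδ
  have hrest := lt_trunc_X_sub_C_sub_eval hdom
  have hval : μ g = μ (C (g.eval a)) :=
    calc μ g = μ (C (g.eval a) + (g - C (g.eval a))) := by rw [add_sub_cancel]
      _ = μ (C (g.eval a)) := μ.map_add_eq_of_lt_left (hrest.trans_le (trunc_X_sub_C_le μ a _))
  exact ⟨(trunc_X_sub_C_eq hdom).trans hval.symm, hval, hrest⟩

/-- If `a` is an optimizing root of `f` and every root of `g` satisfies
`μ(x-b) < δ(f) = μ(x-a)` (i.e. `δ(g) < δ(f)`), then `μ_{x-a}(g) = μ(g) = μ(g(a))` and the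
residue of `g/g(a)` under `μ_{x-a}` is `1`. -/
theorem stmt6 [IsAlgClosed K] (μ : AddValuation (Polynomial K) (WithTop Γ))
    (f : Polynomial K) (hf : 0 < f.natDegree) (a : K) (ha : f.eval a = 0)
    (hopt : ∀ b : K, f.eval b = 0 → μ (X - C b) ≤ μ (X - C a))
    (g : Polynomial K) (hg : g ≠ 0)
    (hδ : ∀ b : K, g.eval b = 0 → μ (X - C b) < μ (X - C a)) :
    trunc (⇑μ) (X - C a) g = μ g ∧ μ g = μ (C (g.eval a)) ∧
      μ (C (g.eval a)) < trunc (⇑μ) (X - C a) (g - C (g.eval a)) :=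
  stmt6_general μ a g hg hδ
end

section
/- Suppose ν is a valuation on K[x] and q ∈ K[x] non-constant with ν_q a valuation. Then the graded algebra G_q of ν_q equals R_q[y], i.e., every homogeneous element in_q(f) is a sum Σ_{i∈S_q(f)} in_q(f_i) y^i, where f = Σ f_i q^i is the q-expansion and S_q(f) = {i : ν_q(f) = ν(f_i q^i)}. -/
open Polynomial

variable {K : Type*} [Field K] {Γ : Type*} [AddCommGroup Γ] [LinearOrder Γ] [IsOrderedAddMonoid Γ]

/-- The additive subgroup `P_γ = {f | ν_q(f) ≥ γ}`. -/
noncomputable def gradedP (W : AddValuation (Polynomial K) (WithTop Γ)) (γ : Γ) :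
    AddSubgroup (Polynomial K) where
  carrier := {f | (γ : WithTop Γ) ≤ W f}
  zero_mem' := by simp
  add_mem' {a b} ha hb := le_trans (le_min ha hb) (W.map_add a b)
  neg_mem' {a} ha := by simpa using ha

/-- The additive subgroup `P_γ⁺ = {f | ν_q(f) > γ}`. -/
noncomputable def gradedPplus (W : AddValuation (Polynomial K) (WithTop Γ)) (γ : Γ) :
    AddSubgroup (Polynomial K) where
  carrier := {f | (γ : WithTop Γ) < W f}
  zero_mem' := by simp [WithTop.coe_lt_top]
  add_mem' {a b} ha hb := lt_of_lt_of_le (lt_min ha hb) (W.map_add a b)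
  neg_mem' {a} ha := by simpa using ha

/-- The homogeneous component `P_γ / P_γ⁺` of the graded algebra. -/
noncomputable def gradedPiece (W : AddValuation (Polynomial K) (WithTop Γ)) (γ : Γ) :=
  gradedP W γ ⧸ (gradedPplus W γ).addSubgroupOf (gradedP W γ)

noncomputable instance (W : AddValuation (Polynomial K) (WithTop Γ)) (γ : Γ) :
    AddCommGroup (gradedPiece W γ) := by
  unfold gradedPiece; infer_instance

/-- The graded algebra `G_q = ⊕_γ P_γ/P_γ⁺` (as an additive group). -/
noncomputable def GradedAlg (W : AddValuation (Polynomial K) (WithTop Γ)) :=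
  DirectSum Γ fun γ => gradedPiece W γ

noncomputable instance (W : AddValuation (Polynomial K) (WithTop Γ)) :
    AddCommGroup (GradedAlg W) := by
  unfold GradedAlg; infer_instance

/-- The initial form `in_q(f)` of `f` in the graded algebra (`0` if `f` is in the support). -/
noncomputable def inq [DecidableEq Γ] (W : AddValuation (Polynomial K) (WithTop Γ))
    (f : Polynomial K) : GradedAlg W :=
  if h : W f = ⊤ then 0
  else DirectSum.of (fun γ => gradedPiece W γ) ((W f).untop h)
    (QuotientAddGroup.mk ⟨f, by exact le_of_eq (WithTop.coe_untop (W f) h)⟩)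

/-- `S_q(f) = {i : ν_q(f) = ν(f_i q^i)}`. -/
noncomputable def Sq (w : Polynomial K → WithTop Γ) (q f : Polynomial K) : Finset ℕ :=
  (Finset.range (f.natDegree + 1)).filter fun i => trunc w q f = w (qCoeff q f i * q ^ i)

/-- `δ_q(f) = max S_q(f)`, with value `⊥` when `f` lies in the support of `ν_q`
(i.e. when the initial form of `f` is zero, so that its `y`-degree is `-∞`). -/
noncomputable def deltaq (w : Polynomial K → WithTop Γ) (q f : Polynomial K) : WithBot ℕ :=
  if trunc w q f = ⊤ then ⊥ else (Sq w q f).max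

/-! In the `q`-expansion `f = Σ f_i q^i` we have `deg f_i < deg q`, so `f_i q^i` is its own
`q`-expansion and `ν_q(f_i q^i) = ν(f_i q^i)`. The terms with `i ∉ S_q(f)` therefore have
`ν_q`-value strictly above `γ = ν_q(f)` and vanish in `P_γ/P_γ⁺`, while the terms with
`i ∈ S_q(f)` all have value `γ`; comparing classes in `P_γ/P_γ⁺` gives the identity. -/

theorem Polynomial.div_eq_of_eq_mul_add {c f g r : K[X]} (hc : c ≠ 0) (h : f = c * g + r)
    (hr : r.degree < c.degree) : f / c = g := by
  have hdm := EuclideanDomain.div_add_mod f c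
  have hdvd : c ∣ f % c - r := ⟨g - f / c, by linear_combination h + hdm⟩
  have hrem : f % c - r = 0 := eq_zero_of_dvd_of_degree_lt hdvd
    ((degree_sub_le _ _).trans_lt (max_lt (degree_mod_lt f hc) hr))
  have hquot : c * (g - f / c) = 0 := by linear_combination -h - hdm + hrem
  exact (sub_eq_zero.mp ((mul_eq_zero.mp hquot).resolve_left hc)).symm

theorem Polynomial.div_mul_eq_div_div {b c : K[X]} (hb : b ≠ 0) (hc : c ≠ 0) (a : K[X]) :
    a / (b * c) = a / b / c := by
  refine div_eq_of_eq_mul_add (mul_ne_zero hb hc) (r := b * (a / b % c) + a % b) ?_ ?_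
  · linear_combination (EuclideanDomain.div_add_mod a b).symm -
      b * EuclideanDomain.div_add_mod (a / b) c
  · have hlow : (a % b).degree < (b * c).degree :=
      (degree_mod_lt a hb).trans_le (degree_le_mul_left b hc)
    have hhigh : (b * (a / b % c)).degree < (b * c).degree := by
      rw [degree_mul, degree_mul]
      exact WithBot.add_lt_add_left (degree_ne_bot.mpr hb) (degree_mod_lt _ hc)
    exact (degree_add_le _ _).trans_lt (max_lt hhigh hlow)

theorem qCoeff_zero (q f : K[X]) : qCoeff q f 0 = f % q := by
  simp [qCoeff]

theorem qCoeff_succ {q : K[X]} (hq : q ≠ 0) (f : K[X]) (i : ℕ) :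
    qCoeff q f (i + 1) = qCoeff q (f / q) i := by
  rw [qCoeff, qCoeff, pow_succ', div_mul_eq_div_div hq (pow_ne_zero i hq)]

theorem sum_range_qCoeff_mul_pow {q : K[X]} (hq : 0 < q.natDegree) {N : ℕ} {f : K[X]}
    (hf : f.natDegree ≤ N) : ∑ i ∈ Finset.range (N + 1), qCoeff q f i * q ^ i = f := by
  have hq0 : q ≠ 0 := ne_zero_of_natDegree_gt hq
  induction N generalizing f with
  | zero =>
    rw [zero_add, Finset.sum_range_one, pow_zero, mul_one, qCoeff_zero,
      mod_eq_self_iff hq0, eq_C_of_natDegree_eq_zero (Nat.le_zero.mp hf)]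
    exact degree_C_le.trans_lt (natDegree_pos_iff_degree_pos.mp hq)
  | succ N ih =>
    have hdiv : (f / q).natDegree ≤ N := by
      by_cases h0 : f / q = 0
      · simp [h0]
      · have := natDegree_lt_natDegree h0
          (degree_div_lt (fun hf0 => by simp [hf0] at h0) (natDegree_pos_iff_degree_pos.mp hq))
        omega
    calc ∑ i ∈ Finset.range (N + 1 + 1), qCoeff q f i * q ^ i
        = (∑ i ∈ Finset.range (N + 1), qCoeff q (f / q) i * q ^ i) * q + f % q := by
          simp only [Finset.sum_range_succ' _ (N + 1), qCoeff_succ hq0, qCoeff_zero,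
            Finset.sum_mul, pow_succ, pow_zero, mul_one, mul_assoc]
      _ = f := by rw [ih hdiv, mul_comm]; exact EuclideanDomain.div_add_mod f q

theorem qCoeff_mul_pow {q : K[X]} (hq : 0 < q.natDegree) {g : K[X]} (hg : g.degree < q.degree)
    (i j : ℕ) : qCoeff q (g * q ^ i) j = if j = i then g else 0 := by
  have hq0 : q ≠ 0 := ne_zero_of_natDegree_gt hq
  unfold qCoeff
  rcases lt_trichotomy j i with hji | rfl | hij
  · rw [if_neg hji.ne, ← Nat.sub_add_cancel hji.le, pow_add, ← mul_assoc,
      mul_div_cancel_right₀ _ (pow_ne_zero j hq0), EuclideanDomain.mod_eq_zero]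
    exact (dvd_pow_self q (by omega)).mul_left g
  · rw [if_pos rfl, mul_div_cancel_right₀ _ (pow_ne_zero j hq0), mod_eq_self_iff hq0]
    exact hg
  · rw [if_neg hij.ne', Polynomial.div_eq_zero_iff (pow_ne_zero j hq0) |>.mpr,
      EuclideanDomain.zero_mod]
    by_cases hg0 : g = 0
    · rw [hg0, zero_mul, degree_zero, bot_lt_iff_ne_bot, Ne, degree_eq_bot]
      exact pow_ne_zero j hq0
    apply degree_lt_degree
    rw [natDegree_mul hg0 (pow_ne_zero i hq0), natDegree_pow, natDegree_pow]
    have : g.natDegree < q.natDegree := natDegree_lt_natDegree hg0 hg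
    nlinarith

theorem trunc_mul_pow (ν : AddValuation K[X] (WithTop Γ)) {q : K[X]} (hq : 0 < q.natDegree)
    {g : K[X]} (hg : g.degree < q.degree) (i : ℕ) :
    trunc (⇑ν) q (g * q ^ i) = ν (g * q ^ i) := by
  unfold trunc
  simp_rw [qCoeff_mul_pow hq hg]
  apply le_antisymm
  · by_cases hg0 : g = 0
    · simp [hg0]
    have hi : i ∈ Finset.range ((g * q ^ i).natDegree + 1) := by
      rw [Finset.mem_range, natDegree_mul hg0 (pow_ne_zero i (ne_zero_of_natDegree_gt hq)),
        natDegree_pow]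
      nlinarith
    exact (Finset.inf_le hi).trans_eq (by rw [if_pos rfl])
  · refine Finset.le_inf fun j _ => ?_
    split_ifs with hji
    · rw [hji]
    · simp

theorem inq_of_val_eq [DecidableEq Γ] (W : AddValuation K[X] (WithTop Γ)) {γ : Γ} {g : K[X]}
    (hg : W g = γ) :
    inq W g = DirectSum.of (fun γ => gradedPiece W γ) γ (QuotientAddGroup.mk ⟨g, hg.ge⟩) := by
  have hne : W g ≠ ⊤ := by simp [hg]
  have hγ : (W g).untop hne = γ := by simp [hg]
  subst hγ
  exact dif_neg hne

theorem inq_eq_sum_of_val_sub_gt [DecidableEq Γ] (W : AddValuation K[X] (WithTop Γ)) {γ : Γ}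
    {ι : Type*} {s : Finset ι} {f : K[X]} {g : ι → K[X]} (hf : W f = γ)
    (hg : ∀ i ∈ s, W (g i) = γ) (hlt : (γ : WithTop Γ) < W (f - ∑ i ∈ s, g i)) :
    inq W f = ∑ i ∈ s, inq W (g i) := by
  let φ : gradedP W γ →+ GradedAlg W :=
    (DirectSum.of (fun γ => gradedPiece W γ) γ).comp (QuotientAddGroup.mk' _)
  have hφ : ∀ a (ha : W a = γ), inq W a = φ ⟨a, ha.ge⟩ := fun a ha => inq_of_val_eq W ha
  rw [hφ f hf, ← Finset.sum_attach s, Finset.sum_congr rfl fun i _ => hφ _ (hg i.1 i.2),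
    ← map_sum]
  refine congrArg (DirectSum.of _ γ) (QuotientAddGroup.eq.mpr ?_)
  rw [AddSubgroup.mem_addSubgroupOf]
  show (γ : WithTop Γ) < W _
  push_cast
  rwa [Finset.sum_attach s g, neg_add_eq_sub, ← neg_sub, W.map_neg]

section Truncation

variable {ν W : AddValuation K[X] (WithTop Γ)} {q : K[X]}

theorem val_qCoeff_mul_pow (hq : 0 < q.natDegree) (hW : ∀ f, W f = trunc (⇑ν) q f)
    (f : K[X]) (i : ℕ) : W (qCoeff q f i * q ^ i) = ν (qCoeff q f i * q ^ i) := by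
  rw [hW]
  exact trunc_mul_pow ν hq (degree_mod_lt _ (ne_zero_of_natDegree_gt hq)) i

theorem val_eq_of_mem_Sq (hq : 0 < q.natDegree) (hW : ∀ f, W f = trunc (⇑ν) q f) {f : K[X]}
    {i : ℕ} (hi : i ∈ Sq (⇑ν) q f) : W (qCoeff q f i * q ^ i) = W f := by
  rw [val_qCoeff_mul_pow hq hW, hW f, (Finset.mem_filter.mp hi).2]

theorem val_lt_val_sub_sum_Sq (hq : 0 < q.natDegree) (hW : ∀ f, W f = trunc (⇑ν) q f)
    {f : K[X]} (hf : W f ≠ ⊤) :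
    W f < W (f - ∑ i ∈ Sq (⇑ν) q f, qCoeff q f i * q ^ i) := by
  have hsplit := Finset.sum_filter_add_sum_filter_not (Finset.range (f.natDegree + 1))
    (fun i => trunc (⇑ν) q f = ν (qCoeff q f i * q ^ i)) (fun i => qCoeff q f i * q ^ i)
  rw [sum_range_qCoeff_mul_pow hq le_rfl] at hsplit
  rw [Sq, ← eq_sub_of_add_eq' hsplit]
  refine W.map_lt_sum hf fun i hi => ?_
  rw [Finset.mem_filter] at hi
  rw [val_qCoeff_mul_pow hq hW, hW f]
  exact lt_of_le_of_ne (Finset.inf_le hi.1) hi.2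

end Truncation

/-- `G_q = R_q[y]` : every initial form `in_q(f)` equals
`Σ_{i ∈ S_q(f)} in_q(f_i) y^i = Σ_{i ∈ S_q(f)} in_q(f_i q^i)`, where `f = Σ f_i q^i` is
the `q`-expansion and `S_q(f) = {i : ν_q(f) = ν(f_i q^i)}`. -/
theorem stmt17 [DecidableEq Γ] (ν : AddValuation (Polynomial K) (WithTop Γ))
    (q : Polynomial K) (hq : 0 < q.natDegree)
    (W : AddValuation (Polynomial K) (WithTop Γ)) (hW : ∀ f, W f = trunc (⇑ν) q f) :
    ∀ f : Polynomial K,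
      inq W f = ∑ i ∈ Sq (⇑ν) q f, inq W (qCoeff q f i * q ^ i) := by
  intro f
  by_cases htop : W f = ⊤
  · have hzero : ∀ i ∈ Sq (⇑ν) q f, inq W (qCoeff q f i * q ^ i) = 0 := fun i hi =>
      dif_pos ((val_eq_of_mem_Sq hq hW hi).trans htop)
    rw [Finset.sum_eq_zero hzero]
    exact dif_pos htop
  · obtain ⟨γ, hγ⟩ := WithTop.ne_top_iff_exists.mp htop
    refine inq_eq_sum_of_val_sub_gt W hγ.symm (fun i hi => ?_) ?_
    · rw [val_eq_of_mem_Sq hq hW hi, hγ]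
    · exact hγ ▸ val_lt_val_sub_sum_Sq hq hW htop
end
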